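/- If the distortion function D is convex, then there exists a measure ν on the Borel sets of [0,1) such that for every X ∈ 𝓛_Q, ϱ_Q[X] = ∫_{[0,1)} (1−α)·ES_α[X] dν(α), where (1−α)·ES_α[X] = ∫_{(α,1)} F^←_X(u) dλ(u). -/

import Mathlib

open MeasureTheory

/-- The distribution function `F_X(x) = P[X ≤ x]` of a random variable `X`. -/
noncomputable def distFun {Ω : Type*} [MeasurableSpace Ω] (P : Measure Ω) (X : Ω → ℝ) (x : ℝ) : ℝ :=
  (P {ω | X ω ≤ x}).toReal

/-- The (lower) quantile function `F^←_X(u) = inf {x | F_X(x) ≥ u}`. -/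
noncomputable def quantile {Ω : Type*} [MeasurableSpace Ω] (P : Measure Ω) (X : Ω → ℝ) (u : ℝ) : ℝ :=
  sInf {x : ℝ | u ≤ distFun P X x}

/-- A distortion function: an increasing, right-continuous `D : [0,1] → [0,1]`
with `D 0 = 0` and `sup_{u ∈ (0,1)} D u = 1`. -/
structure IsDistortion (D : ℝ → ℝ) : Prop where
  mapsTo : ∀ u ∈ Set.Icc (0:ℝ) 1, D u ∈ Set.Icc (0:ℝ) 1
  mono : ∀ ⦃a b : ℝ⦄, 0 ≤ a → a ≤ b → b ≤ 1 → D a ≤ D b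
  rightCont : ∀ u ∈ Set.Ico (0:ℝ) 1, ContinuousWithinAt D (Set.Icc u 1) u
  zero : D 0 = 0
  sup_one : sSup (D '' Set.Ioo 0 1) = 1

/-- `Q` is the probability measure on the Borel sets of `(0,1)` corresponding to
the distortion function `D`, i.e. `Q (a,b] = D b - D a` for `0 < a ≤ b < 1`. -/
def IsCorresponding (D : ℝ → ℝ) (Q : Measure ℝ) : Prop :=
  IsProbabilityMeasure Q ∧ Q (Set.Ioo (0:ℝ) 1) = 1 ∧
    ∀ a b : ℝ, 0 < a → a ≤ b → b < 1 → Q (Set.Ioc a b) = ENNReal.ofReal (D b - D a)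

/-- `X ∈ 𝓛_Q`, i.e. `∫_{(0,1)} (F^←_X(u))⁺ dQ(u) < ∞`. -/
def memLQ {Ω : Type*} [MeasurableSpace Ω] (P : Measure Ω) (Q : Measure ℝ) (X : Ω → ℝ) : Prop :=
  ∫⁻ u in Set.Ioo (0:ℝ) 1, ENNReal.ofReal (max (quantile P X u) 0) ∂Q < ⊤

/-- The quantile risk measure
`ϱ_Q[X] = ∫_{(0,1)} (F^←_X(u))⁺ dQ(u) - ∫_{(0,1)} (F^←_X(u))⁻ dQ(u)`, with values in `EReal`. -/
noncomputable def rho {Ω : Type*} [MeasurableSpace Ω] (P : Measure Ω) (Q : Measure ℝ)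
    (X : Ω → ℝ) : EReal :=
  ((∫⁻ u in Set.Ioo (0:ℝ) 1, ENNReal.ofReal (max (quantile P X u) 0) ∂Q) : EReal)
    - ((∫⁻ u in Set.Ioo (0:ℝ) 1, ENNReal.ofReal (max (-(quantile P X u)) 0) ∂Q) : EReal)

/-- The expected shortfall at level `α`:
`ES_α[X] = (1/(1-α)) ∫_{(α,1)} F^←_X(u) dλ(u)`, with values in `EReal`. -/
noncomputable def ES {Ω : Type*} [MeasurableSpace Ω] (P : Measure Ω) (α : ℝ) (X : Ω → ℝ) : EReal :=
  ((1 / (1 - α) : ℝ) : EReal) *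
    (((∫⁻ u in Set.Ioo α 1, ENNReal.ofReal (max (quantile P X u) 0)) : EReal)
      - ((∫⁻ u in Set.Ioo α 1, ENNReal.ofReal (max (-(quantile P X u)) 0)) : EReal))

/-!
For convex `D` the right derivative `D'₊` is nonnegative and nondecreasing on `(0,1)`, and by the
fundamental theorem of calculus `Q` has density `D'₊` there. A nonnegative nondecreasing function
on `(0,1)` agrees, off a countable set, with `u ↦ ν [0,u)` for a measure `ν` on `[0,1)`: since
`D'₊` may blow up at `1`, take the Stieltjes measure of `D'₊ (1 - t⁻¹)` on `[1,∞)` and push it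
forward along `t ↦ 1 - t⁻¹`. Tonelli then turns `∫ f(u) ν[0,u) du` into
`∫_{[0,1)} ∫_{(α,1)} f(u) du dν(α)`; apply this to the positive and negative parts of the quantile
function, which is monotone, hence measurable, on `(0,1)`.
-/

open Set Filter Topology ProbabilityTheory
open scoped ENNReal

lemma monotoneOn_sInf_setOf_le {F : ℝ → ℝ} (hbot : Tendsto F atBot (𝓝 0))
    (htop : Tendsto F atTop (𝓝 1)) : MonotoneOn (fun u => sInf {x | u ≤ F x}) (Ioo 0 1) := by
  intro u hu v hv huv
  refine csInf_le_csInf ?_ ?_ fun x (hx : v ≤ F x) => huv.trans hx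
  · obtain ⟨y, hy⟩ := (hbot.eventually (gt_mem_nhds hu.1)).exists_forall_of_atBot
    exact ⟨y, fun x (hx : u ≤ F x) => le_of_not_gt fun hxy => (hy x hxy.le).not_ge hx⟩
  · exact (htop.eventually (lt_mem_nhds hv.2)).exists.imp fun _ h => h.le

section Quantile

variable {Ω : Type*} [MeasurableSpace Ω] (P : Measure Ω) [IsProbabilityMeasure P] {X : Ω → ℝ}

lemma distFun_eq_cdf_map (hX : Measurable X) : distFun P X = cdf (P.map X) := by
  have := Measure.isProbabilityMeasure_map (μ := P) hX.aemeasurable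
  ext x
  rw [distFun, cdf_eq_real, measureReal_def, Measure.map_apply hX measurableSet_Iic]
  rfl

lemma monotoneOn_quantile (hX : Measurable X) : MonotoneOn (quantile P X) (Ioo 0 1) := by
  unfold quantile
  rw [distFun_eq_cdf_map P hX]
  exact monotoneOn_sInf_setOf_le (tendsto_cdf_atBot _) (tendsto_cdf_atTop _)

end Quantile

lemma MonotoneOn.rightDeriv_nonneg {f : ℝ → ℝ} {S : Set ℝ} {x : ℝ} (hf : MonotoneOn f S)
    (hS : S ∈ 𝓝 x) : 0 ≤ derivWithin f (Ioi x) x := by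
  rw [← derivWithin_inter hS]
  exact (hf.mono inter_subset_right).derivWithin_nonneg

lemma ConvexOn.integral_rightDeriv_eq_sub {f : ℝ → ℝ} {S : Set ℝ} (hf : ConvexOn ℝ S f)
    {a b : ℝ} (hab : a ≤ b) (hS : Icc a b ⊆ interior S) :
    ∫ x in a..b, derivWithin f (Ioi x) x = f b - f a := by
  refine intervalIntegral.integral_eq_sub_of_hasDeriv_right_of_le hab
    (hf.continuousOn_interior.mono hS)
    (fun x hx => hf.hasDerivWithinAt_rightDeriv_of_mem_interior (hS (Ioo_subset_Icc_self hx))) ?_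
  exact (hf.monotoneOn_rightDeriv.mono (by rwa [uIcc_of_le hab])).intervalIntegrable

lemma ConvexOn.setLIntegral_Ioc_ofReal_rightDeriv {f : ℝ → ℝ} {S : Set ℝ}
    (hconv : ConvexOn ℝ S f) (hmono : MonotoneOn f S) {a b : ℝ} (hab : a ≤ b)
    (hS : Icc a b ⊆ interior S) :
    ∫⁻ u in Ioc a b, ENNReal.ofReal (derivWithin f (Ioi u) u) = ENNReal.ofReal (f b - f a) := by
  rw [← hconv.integral_rightDeriv_eq_sub hab hS, intervalIntegral.integral_of_le hab,
    ofReal_integral_eq_lintegral_ofReal]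
  · exact ((hconv.monotoneOn_rightDeriv.mono hS).integrableOn_isCompact isCompact_Icc).mono_set
      Ioc_subset_Icc_self
  · exact ae_restrict_of_forall_mem measurableSet_Ioc fun u hu =>
      hmono.rightDeriv_nonneg (mem_interior_iff_mem_nhds.1 (hS (Ioc_subset_Icc_self hu)))

lemma one_sub_inv_mem_Ico {t : ℝ} (ht : 1 ≤ t) : 1 - t⁻¹ ∈ Ico 0 1 :=
  ⟨sub_nonneg.2 (inv_le_one_of_one_le₀ ht), sub_lt_self _ (inv_pos.2 (zero_lt_one.trans_le ht))⟩

lemma one_sub_inv_mem_Ioo {t : ℝ} (ht : 1 < t) : 1 - t⁻¹ ∈ Ioo 0 1 :=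
  ⟨sub_pos.2 (inv_lt_one_of_one_lt₀ ht), (one_sub_inv_mem_Ico ht.le).2⟩

lemma one_sub_inv_lt_iff {t u : ℝ} (ht : 0 < t) (hu : u < 1) : 1 - t⁻¹ < u ↔ t < (1 - u)⁻¹ := by
  rw [sub_lt_comm, lt_inv_comm₀ (sub_pos.2 hu) ht]

lemma map_one_sub_inv_restrict_Ici_one_compl_Ico (μ : Measure ℝ) :
    (μ.restrict (Ici 1)).map (fun t => 1 - t⁻¹) (Ico 0 1)ᶜ = 0 := by
  rw [Measure.map_apply (by fun_prop) measurableSet_Ico.compl,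
    Measure.restrict_apply (measurableSet_Ico.compl.preimage (by fun_prop))]
  convert measure_empty (μ := μ)
  exact eq_empty_of_forall_notMem fun t ⟨hcompl, ht⟩ => hcompl (one_sub_inv_mem_Ico ht)

lemma map_one_sub_inv_restrict_Ici_one_Iio (μ : Measure ℝ) {u : ℝ} (hu : u < 1) :
    (μ.restrict (Ici 1)).map (fun t => 1 - t⁻¹) (Iio u) = μ (Ico 1 (1 - u)⁻¹) := by
  rw [Measure.map_apply (by fun_prop) measurableSet_Iio,
    Measure.restrict_apply (measurableSet_Iio.preimage (by fun_prop))]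
  congr 1
  ext t
  simp only [mem_inter_iff, mem_preimage, mem_Iio, mem_Ici, mem_Ico]
  constructor
  · rintro ⟨hlt, ht⟩
    exact ⟨ht, (one_sub_inv_lt_iff (zero_lt_one.trans_le ht) hu).1 hlt⟩
  · rintro ⟨ht, hlt⟩
    exact ⟨(one_sub_inv_lt_iff (zero_lt_one.trans_le ht) hu).2 hlt, ht⟩

noncomputable def liftToIoi (g : ℝ → ℝ) (t : ℝ) : ℝ := if t ≤ 1 then 0 else g (1 - t⁻¹)

lemma monotone_liftToIoi {g : ℝ → ℝ} (hg : MonotoneOn g (Ioo 0 1))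
    (hg0 : ∀ u ∈ Ioo 0 1, 0 ≤ g u) : Monotone (liftToIoi g) := by
  intro s t hst
  unfold liftToIoi
  split_ifs with hs ht ht
  · rfl
  · exact hg0 _ (one_sub_inv_mem_Ioo (not_le.1 ht))
  · exact absurd (hst.trans ht) hs
  · exact hg (one_sub_inv_mem_Ioo (not_le.1 hs)) (one_sub_inv_mem_Ioo (not_le.1 ht))
      (sub_le_sub_left (inv_anti₀ (zero_lt_one.trans (not_le.1 hs)) hst) 1)

lemma exists_measure_Iio_ae_eq {g : ℝ → ℝ} (hg : MonotoneOn g (Ioo 0 1))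
    (hg0 : ∀ u ∈ Ioo 0 1, 0 ≤ g u) :
    ∃ ν : Measure ℝ, SFinite ν ∧ ν (Ico 0 1)ᶜ = 0 ∧
      ∀ᵐ u ∂volume.restrict (Ioo 0 1), ν (Iio u) = ENNReal.ofReal (g u) := by
  have hH := monotone_liftToIoi hg hg0
  set G := hH.stieltjesFunction
  set ν := (G.measure.restrict (Ici 1)).map (fun t => 1 - t⁻¹)
  have hleftLim (s : ℝ) : Function.leftLim G s = Function.leftLim (liftToIoi g) s :=
    leftLim_rightLim (hH.tendsto_leftLim s)
  have hleftLim_one : Function.leftLim (liftToIoi g) 1 = 0 :=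
    le_antisymm ((hH.leftLim_le le_rfl).trans_eq (if_pos le_rfl))
      ((if_pos zero_le_one).symm.trans_le (hH.le_leftLim zero_lt_one))
  have hcont {u : ℝ} (hu : u ∈ Ioo 0 1) (hc : ContinuousAt (liftToIoi g) (1 - u)⁻¹) :
      ν (Iio u) = ENNReal.ofReal (g u) := by
    have hs : 1 < (1 - u)⁻¹ := one_lt_inv₀ (sub_pos.2 hu.2) |>.2 (sub_lt_self _ hu.1)
    rw [map_one_sub_inv_restrict_Ici_one_Iio _ hu.2, StieltjesFunction.measure_Ico, hleftLim,
      hleftLim, hleftLim_one, sub_zero, hc.continuousWithinAt.leftLim_eq, liftToIoi,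
      if_neg hs.not_ge, inv_inv, sub_sub_cancel]
  refine ⟨ν, inferInstance, map_one_sub_inv_restrict_Ici_one_compl_Ico _, ?_⟩
  rw [ae_restrict_iff' measurableSet_Ioo]
  filter_upwards [(hH.countable_not_continuousAt.image fun t => 1 - t⁻¹).ae_notMem volume]
    with u hbad hu
  exact hcont hu <| by_contra fun hc =>
    hbad ⟨(1 - u)⁻¹, hc, by simp only [inv_inv, sub_sub_cancel]⟩

lemma lintegral_setLIntegral_Ioi_eq_lintegral_measure_Iio_mul {μ ν : Measure ℝ} [SFinite μ]
    [SFinite ν] {f : ℝ → ℝ≥0∞} (hf : AEMeasurable f μ) :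
    ∫⁻ α, ∫⁻ u in Ioi α, f u ∂μ ∂ν = ∫⁻ u, ν (Iio u) * f u ∂μ := by
  have hind (α : ℝ) : ∫⁻ u in Ioi α, f u ∂μ = ∫⁻ u, (Iio u).indicator (fun _ => f u) α ∂μ := by
    rw [← lintegral_indicator measurableSet_Ioi]
    rfl
  simp_rw [hind]
  rw [← lintegral_lintegral_swap (f := fun u α => (Iio u).indicator (fun _ => f u) α)
    (hf.comp_fst.indicator (measurableSet_lt measurable_snd measurable_fst))]
  simp_rw [lintegral_indicator_const measurableSet_Iio, mul_comm]

lemma setLIntegral_Ico_setLIntegral_Ioo_eq {μ ν : Measure ℝ} [SFinite μ] [SFinite ν]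
    (hν : ν (Ico 0 1)ᶜ = 0) {f : ℝ → ℝ≥0∞} (hf : AEMeasurable f (μ.restrict (Ioo 0 1))) :
    ∫⁻ α in Ico 0 1, ∫⁻ u in Ioo α 1, f u ∂μ ∂ν = ∫⁻ u in Ioo 0 1, ν (Iio u) * f u ∂μ := by
  have hae : ∀ᵐ α ∂ν, α ∈ Ico 0 1 := ae_iff.2 hν
  rw [Measure.restrict_eq_self_of_ae_mem hae,
    ← lintegral_setLIntegral_Ioi_eq_lintegral_measure_Iio_mul hf]
  refine lintegral_congr_ae (hae.mono fun α hα => ?_)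
  dsimp only
  rw [Measure.restrict_restrict measurableSet_Ioi]
  congr 2
  ext u
  simp only [mem_Ioo, mem_inter_iff, mem_Ioi]
  exact ⟨fun h => ⟨h.1, hα.1.trans_lt h.1, h.2⟩, fun h => ⟨h.1, h.2.2⟩⟩

lemma restrict_Ioo_zero_one_eq_of_measure_Ioc_eq {μ ν : Measure ℝ} [IsFiniteMeasure μ]
    (h : ∀ a b : ℝ, 0 < a → a ≤ b → b < 1 → μ (Ioc a b) = ν (Ioc a b)) :
    μ.restrict (Ioo 0 1) = ν.restrict (Ioo 0 1) := by
  have hunion : Ioo (0 : ℝ) 1 = ⋃ n : ℕ, Ioc (1 / ((n : ℝ) + 1)) (1 - 1 / ((n : ℝ) + 1)) := by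
    ext u
    simp only [mem_Ioo, mem_iUnion, mem_Ioc]
    constructor
    · rintro ⟨hu0, hu1⟩
      obtain ⟨n, hn⟩ := exists_nat_one_div_lt (lt_min hu0 (sub_pos.2 hu1))
      exact ⟨n, hn.trans_le (min_le_left _ _), by linarith [min_le_right u (1 - u)]⟩
    · rintro ⟨n, hn, hn'⟩
      have : (0 : ℝ) < 1 / (n + 1) := Nat.one_div_pos_of_nat
      exact ⟨this.trans hn, by linarith⟩
  rw [hunion, Measure.restrict_iUnion_congr]
  intro n
  have ha : (0 : ℝ) < 1 / (n + 1) := Nat.one_div_pos_of_nat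
  refine Measure.ext_of_Ioc' _ _ (fun _ _ _ => measure_ne_top _ _) fun x y _ => ?_
  rw [Measure.restrict_apply measurableSet_Ioc, Measure.restrict_apply measurableSet_Ioc,
    Ioc_inter_Ioc]
  rcases le_or_gt (x ⊔ 1 / (n + 1)) (y ⊓ (1 - 1 / (n + 1))) with hle | hlt
  · exact h _ _ (ha.trans_le le_sup_right) hle (inf_le_right.trans_lt (by linarith))
  · rw [Ioc_eq_empty hlt.not_gt, measure_empty, measure_empty]

lemma setLIntegral_Ioo_eq_of_restrict_eq_withDensity {Q ν : Measure ℝ} [SFinite ν]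
    (hν : ν (Ico 0 1)ᶜ = 0)
    (hQ : Q.restrict (Ioo 0 1) = (volume.withDensity fun u => ν (Iio u)).restrict (Ioo 0 1))
    {f : ℝ → ℝ≥0∞} (hf : AEMeasurable f (volume.restrict (Ioo 0 1))) :
    ∫⁻ u in Ioo 0 1, f u ∂Q = ∫⁻ α in Ico 0 1, ∫⁻ u in Ioo α 1, f u ∂volume ∂ν := by
  have hw : Monotone fun u => ν (Iio u) := fun _ _ h => measure_mono (Iio_subset_Iio h)
  rw [hQ, restrict_withDensity measurableSet_Ioo,
    lintegral_withDensity_eq_lintegral_mul₀ hw.measurable.aemeasurable hf]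
  exact (setLIntegral_Ico_setLIntegral_Ioo_eq hν hf).symm

lemma coe_one_sub_mul_ES {Ω : Type*} [MeasurableSpace Ω] (P : Measure Ω) (X : Ω → ℝ) {α : ℝ}
    (hα : α < 1) :
    ((1 - α : ℝ) : EReal) * ES P α X
      = ((∫⁻ u in Ioo α 1, ENNReal.ofReal (max (quantile P X u) 0)) : EReal)
        - ((∫⁻ u in Ioo α 1, ENNReal.ofReal (max (-(quantile P X u)) 0)) : EReal) := by
  rw [ES, ← mul_assoc, ← EReal.coe_mul, mul_one_div_cancel (sub_ne_zero.2 hα.ne'), EReal.coe_one,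
    one_mul]

/-- If `D` is convex, then there is a measure `ν` on the Borel sets of `[0,1)` such that
`ϱ_Q[X] = ∫_{[0,1)} (1-α)·ES_α[X] dν(α)` for every `X ∈ 𝓛_Q`, where
`(1-α)·ES_α[X] = ∫_{(α,1)} F^←_X(u) dλ(u)` (the `EReal`-valued integral is expressed as the
difference of the `ν`-integrals of the positive and negative parts). -/
theorem rho_eq_integral_ES_of_convex {Ω : Type*} [MeasurableSpace Ω]
    (P : Measure Ω) [IsProbabilityMeasure P] (D : ℝ → ℝ) (Q : Measure ℝ)
    (hD : IsDistortion D) (hQ : IsCorresponding D Q)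
    (hconv : ConvexOn ℝ (Set.Icc (0:ℝ) 1) D) :
    ∃ ν : Measure ℝ, ν (Set.Ico (0:ℝ) 1)ᶜ = 0 ∧
      ∀ X : Ω → ℝ, Measurable X → memLQ P Q X →
        (∀ α ∈ Set.Ico (0:ℝ) 1,
          ((1 - α : ℝ) : EReal) * ES P α X
            = ((∫⁻ u in Set.Ioo α 1, ENNReal.ofReal (max (quantile P X u) 0)) : EReal)
              - ((∫⁻ u in Set.Ioo α 1, ENNReal.ofReal (max (-(quantile P X u)) 0)) : EReal)) ∧
        rho P Q X
          = ((∫⁻ α in Set.Ico (0:ℝ) 1,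
                ∫⁻ u in Set.Ioo α 1, ENNReal.ofReal (max (quantile P X u) 0) ∂volume ∂ν) : EReal)
            - ((∫⁻ α in Set.Ico (0:ℝ) 1,
                ∫⁻ u in Set.Ioo α 1, ENNReal.ofReal (max (-(quantile P X u)) 0) ∂volume ∂ν) : EReal) := by
  obtain ⟨hQprob, -, hQIoc⟩ := hQ
  have hmono : MonotoneOn D (Icc 0 1) := fun a ha b hb hab => hD.mono ha.1 hab hb.2
  have hint : interior (Icc (0 : ℝ) 1) = Ioo 0 1 := interior_Icc
  obtain ⟨ν, _, hν, hνD⟩ := exists_measure_Iio_ae_eq (hint ▸ hconv.monotoneOn_rightDeriv)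
    fun u hu => hmono.rightDeriv_nonneg (Icc_mem_nhds hu.1 hu.2)
  have hQν :
      Q.restrict (Ioo 0 1) = (volume.withDensity fun u => ν (Iio u)).restrict (Ioo 0 1) := by
    refine restrict_Ioo_zero_one_eq_of_measure_Ioc_eq fun a b ha hab hb => ?_
    have hsub : Ioc a b ⊆ Ioo 0 1 := fun u hu => ⟨ha.trans hu.1, hu.2.trans_lt hb⟩
    rw [hQIoc a b ha hab hb, withDensity_apply _ measurableSet_Ioc,
      lintegral_congr_ae (ae_restrict_of_ae_restrict_of_subset hsub hνD),
      hconv.setLIntegral_Ioc_ofReal_rightDeriv hmono hab (hint ▸ Icc_subset_Ioo ha hb)]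
  refine ⟨ν, hν, fun X hX _ => ⟨fun α hα => coe_one_sub_mul_ES P X hα.2, ?_⟩⟩
  have hq : AEMeasurable (quantile P X) (volume.restrict (Ioo 0 1)) :=
    aemeasurable_restrict_of_monotoneOn measurableSet_Ioo (monotoneOn_quantile P hX)
  rw [rho, setLIntegral_Ioo_eq_of_restrict_eq_withDensity hν hQν
      (hq.max aemeasurable_const).ennreal_ofReal,
    setLIntegral_Ioo_eq_of_restrict_eq_withDensity hν hQν
      (f := fun u => ENNReal.ofReal (max (-quantile P X u) 0))
      (hq.neg.max aemeasurable_const).ennreal_ofReal]
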